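/- Each of the six formulas ψ1 := ◇T(x)∧◇F(x)∧◇N(x), ψ2 := ◇T(x)∧¬◇F(x)∧◇N(x), ψ3 := ¬◇T(x)∧◇F(x)∧◇N(x), ψ4 := ◇T(x)∧¬◇F(x)∧¬◇N(x), ψ5 := ¬◇T(x)∧◇F(x)∧¬◇N(x), ψ6 := ¬◇T(x)∧¬◇F(x)∧◇N(x) is an intensional 1-isolator for S5[Con,Ground], and every intensional 1-isolator for S5[Con,Ground] is S5[Con,Ground]-equivalent to exactly one of these six formulas. -/
import Mathlib


namespace KripkeModal

/-- Formulas of the modal language `L_□`: atoms `T(x)`, `F(x)` for variables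
`x : ℕ`, negation, conjunction, and box. -/
inductive Fml : Type
  | tt : ℕ → Fml   -- T(x)
  | ff : ℕ → Fml   -- F(x)
  | neg : Fml → Fml
  | and : Fml → Fml → Fml
  | box : Fml → Fml
deriving DecidableEq

namespace Fml

/-- Material implication, defined from `¬, ∧`. -/
def imp (φ ψ : Fml) : Fml := neg (and φ (neg ψ))

/-- Disjunction, defined from `¬, ∧`. -/
def or (φ ψ : Fml) : Fml := neg (and (neg φ) (neg ψ))

/-- Biconditional. -/
def iff (φ ψ : Fml) : Fml := and (imp φ ψ) (imp ψ φ)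

/-- Diamond: `◇φ := ¬□¬φ`. -/
def dia (φ : Fml) : Fml := neg (box (neg φ))

/-- `N(x) := ¬T(x) ∧ ¬F(x)`. -/
def Nf (x : ℕ) : Fml := and (neg (tt x)) (neg (ff x))

/-- A fixed contradiction. -/
def bot : Fml := and (tt 0) (neg (tt 0))

end Fml

open Fml

/-- Evaluate a formula propositionally under a valuation `v` of the "atoms":
the atomic formulas `T(x)`, `F(x)` and all boxed formulas are treated as
propositional atoms. -/
def evalProp (v : Fml → Bool) : Fml → Bool
  | Fml.neg φ => !(evalProp v φ)
  | Fml.and φ ψ => evalProp v φ && evalProp v ψ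
  | φ => v φ

/-- A formula is a substitution instance of a classical propositional tautology
iff it evaluates to true under every propositional valuation of its atoms. -/
def Tautology (φ : Fml) : Prop := ∀ v : Fml → Bool, evalProp v φ = true

/-- Provability in the modal system `S5[Ax]`: the smallest set of formulas
containing all substitution instances of propositional tautologies, all
instances of K, T and 5, all formulas in `Ax`, closed under modus ponens and
necessitation.  Taking `Ax = ∅` gives `S5` itself. -/
inductive Prv (Ax : Set Fml) : Fml → Prop
  | taut {φ} : Tautology φ → Prv Ax φ
  | axK (A B : Fml) : Prv Ax (imp (box (imp A B)) (imp (box A) (box B)))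
  | axT (A : Fml) : Prv Ax (imp (box A) A)
  | ax5 (A : Fml) : Prv Ax (imp (dia A) (box (dia A)))
  | axm {φ} : φ ∈ Ax → Prv Ax φ
  | mp {A B} : Prv Ax (imp A B) → Prv Ax A → Prv Ax B
  | nec {A} : Prv Ax A → Prv Ax (box A)

/-- A system is consistent if it does not prove a contradiction. -/
def Consistent (Ax : Set Fml) : Prop := ¬ Prv Ax Fml.bot

/-- The axiom schema `Con`: `¬(T(x) ∧ F(x))`. -/
def ConAx : Set Fml := { φ | ∃ x : ℕ, φ = neg (and (tt x) (ff x)) }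

/-- The axiom schema `Ground`: `(◇T(x) ∧ ◇F(x)) → ◇N(x)`. -/
def GroundAx : Set Fml :=
  { φ | ∃ x : ℕ, φ = imp (and (dia (tt x)) (dia (ff x))) (dia (Nf x)) }

/-- Conjunction of a list of formulas (empty conjunction is `¬⊥`). -/
def bigAnd : List Fml → Fml
  | [] => Fml.neg Fml.bot
  | [φ] => φ
  | φ :: ψ :: rest => Fml.and φ (bigAnd (ψ :: rest))

/-- Disjunction of a list of formulas (the empty disjunction is the fixed
contradiction `⊥`). -/
def bigOr : List Fml → Fml
  | [] => Fml.bot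
  | [φ] => φ
  | φ :: ψ :: rest => Fml.or φ (bigOr (ψ :: rest))

/-- The axiom schema `Min_n`: all instances
`(◇N(x_1) ∧ … ∧ ◇N(x_n)) → ◇(N(x_1) ∧ … ∧ N(x_n))` obtained by substituting
arbitrary (not necessarily distinct) variables for `x_1, …, x_n`. -/
def MinAx (n : ℕ) : Set Fml :=
  { φ | ∃ l : List ℕ, l.length = n ∧
      φ = imp (bigAnd (l.map (fun x => dia (Nf x)))) (dia (bigAnd (l.map Nf))) }

/-- A formula is extensional if it contains no `□`. -/
def Extensional : Fml → Prop
  | tt _ => True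
  | ff _ => True
  | Fml.neg φ => Extensional φ
  | Fml.and φ ψ => Extensional φ ∧ Extensional ψ
  | box _ => False

/-- A formula is intensional if every atomic subformula occurs within the
scope of a `□`. -/
def Intensional : Fml → Prop
  | tt _ => False
  | ff _ => False
  | Fml.neg φ => Intensional φ
  | Fml.and φ ψ => Intensional φ ∧ Intensional ψ
  | box _ => True

/-- The set of variables occurring in a formula. -/
def vars : Fml → Set ℕ
  | tt x => {x}
  | ff x => {x}
  | Fml.neg φ => vars φ
  | Fml.and φ ψ => vars φ ∪ vars ψ
  | box φ => vars φ

/-- An `n`-formula: one whose atoms use only the variables `x_1, …, x_n`. -/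
def IsNFormula (n : ℕ) (φ : Fml) : Prop := vars φ ⊆ {x | 1 ≤ x ∧ x ≤ n}

/-- A 1-formula: one whose atoms use only the single variable `x_1`. -/
abbrev Is1Formula (φ : Fml) : Prop := IsNFormula 1 φ

/-- `φ` is `Γ`-maximal for the system `S5[Ax]`. -/
def GammaMaximal (Ax : Set Fml) (Γ : Set Fml) (φ : Fml) : Prop :=
  Consistent (Ax ∪ {φ}) ∧ φ ∈ Γ ∧
    ∀ ψ ∈ Γ, Prv Ax (imp φ ψ) ∨ Prv Ax (imp φ (neg ψ))

/-- Extensional `n`-isolators for `S5[Ax]`. -/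
def ExtIsolator (n : ℕ) (Ax : Set Fml) (φ : Fml) : Prop :=
  GammaMaximal Ax {ψ | Extensional ψ ∧ IsNFormula n ψ} φ

/-- Intensional `n`-isolators for `S5[Ax]`. -/
def IntIsolator (n : ℕ) (Ax : Set Fml) (φ : Fml) : Prop :=
  GammaMaximal Ax {ψ | Intensional ψ ∧ IsNFormula n ψ} φ

/-- An `n`-isolator for `S5[Ax]`: a consistent conjunction `ε ∧ ι` of an
extensional `n`-isolator and an intensional `n`-isolator. -/
def Isolator (n : ℕ) (Ax : Set Fml) (φ : Fml) : Prop :=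
  ∃ ε ι, ExtIsolator n Ax ε ∧ IntIsolator n Ax ι ∧
    φ = Fml.and ε ι ∧ Consistent (Ax ∪ {φ})

/-- Satisfaction in a model `(W, V)` (with `V = (V1, V2)`) at a world `w`. -/
def Sat {W : Type*} (V1 V2 : ℕ → Set W) : W → Fml → Prop
  | w, tt x => w ∈ V1 x
  | w, ff x => w ∈ V2 x
  | w, Fml.neg φ => ¬ Sat V1 V2 w φ
  | w, Fml.and φ ψ => Sat V1 V2 w φ ∧ Sat V1 V2 w ψ
  | _, box φ => ∀ v, Sat V1 V2 v φ

/-- The variable assignment satisfies the `Con` constraint. -/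
def ConC {W : Type*} (V1 V2 : ℕ → Set W) : Prop := ∀ x, V1 x ∩ V2 x = ∅

/-- The variable assignment satisfies the `Ground` constraint. -/
def GroundC {W : Type*} (V1 V2 : ℕ → Set W) : Prop :=
  ∀ x, (V1 x).Nonempty → (V2 x).Nonempty → ((V1 x ∪ V2 x)ᶜ : Set W).Nonempty

/-- The variable assignment satisfies the `Min` constraint. -/
def MinC {W : Type*} (V1 V2 : ℕ → Set W) : Prop :=
  ∀ l : List ℕ, l ≠ [] → (∀ x ∈ l, ((V1 x ∪ V2 x)ᶜ : Set W).Nonempty) →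
    (⋂ x ∈ l, ((V1 x ∪ V2 x)ᶜ : Set W)).Nonempty

/-- The prime conditions for a subset `S` of the tensor `[3]^n`, realized as
`Fin n → Fin 3` where the value `0` stands for the layer `T`, `1` for `F`,
and `2` for `N` (i.e. `1, 2, 3` in the paper's numbering). -/
def PrimeConditions (n : ℕ) (S : Set (Fin n → Fin 3)) : Prop :=
  S.Nonempty ∧
  (∀ j : Fin n, (S ∩ {a | a j = 0}).Nonempty → (S ∩ {a | a j = 1}).Nonempty →
      (S ∩ {a | a j = 2}).Nonempty) ∧
  ∀ J : Set (Fin n), J.Nonempty →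
    (∀ j ∈ J, (S ∩ {a | a j = 2}).Nonempty) →
    (S ∩ ⋂ j ∈ J, {a | a j = 2}).Nonempty

/-- `χ_1 = T`, `χ_2 = F`, `χ_3 = N` (with `Fin 3` values `0, 1, 2`). -/
def chi (k : Fin 3) (x : ℕ) : Fml :=
  if k = 0 then tt x else if k = 1 then ff x else Nf x

/-- The extensional `n`-isolator `φ_a = χ_{a_1}(x_1) ∧ … ∧ χ_{a_n}(x_n)`
associated with a tuple `a ∈ [3]^n`. -/
def tupleFml {n : ℕ} (a : Fin n → Fin 3) : Fml :=
  bigAnd ((List.finRange n).map (fun i => chi (a i) (i.1 + 1)))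

open Classical in
/-- The pre-`n`-isolator of `S ⊆ [3]^n`:
`⋀_{a ∈ S} ◇φ_a ∧ ⋀_{a ∉ S} ¬◇φ_a`. -/
noncomputable def preIsolator (n : ℕ) (S : Set (Fin n → Fin 3)) : Fml :=
  bigAnd (((Finset.univ : Finset (Fin n → Fin 3)).toList).map
    (fun a => if a ∈ S then dia (tupleFml a) else Fml.neg (dia (tupleFml a))))


/-! ### Auxiliary: a verified tautology checker and substitution -/

namespace Fml

/-- The propositional "leaves" (atoms) of a formula. -/
def leaves : Fml → List Fml
  | neg φ => leaves φ
  | and φ ψ => leaves φ ++ leaves ψ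
  | φ => [φ]

/-- Substitute formulas for the `tt`-atoms (used for tautology schemes). -/
def sub (f : ℕ → Fml) : Fml → Fml
  | tt n => f n
  | neg φ => neg (sub f φ)
  | and φ ψ => and (sub f φ) (sub f ψ)
  | φ => φ

end Fml

@[simp] lemma evalProp_tt (v : Fml → Bool) (x : ℕ) : evalProp v (Fml.tt x) = v (Fml.tt x) := rfl
@[simp] lemma evalProp_ff (v : Fml → Bool) (x : ℕ) : evalProp v (Fml.ff x) = v (Fml.ff x) := rfl
@[simp] lemma evalProp_box (v : Fml → Bool) (φ : Fml) : evalProp v (Fml.box φ) = v (Fml.box φ) := rfl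
@[simp] lemma evalProp_neg (v : Fml → Bool) (φ : Fml) : evalProp v (Fml.neg φ) = !evalProp v φ := rfl
@[simp] lemma evalProp_and (v : Fml → Bool) (φ ψ : Fml) :
    evalProp v (Fml.and φ ψ) = (evalProp v φ && evalProp v ψ) := rfl

/-- All valuations of a finite list of atoms. -/
def allAsg : List Fml → List (Fml → Bool)
  | [] => [fun _ => false]
  | a :: l => (allAsg l).flatMap (fun v =>
      [fun ψ => if ψ = a then true else v ψ, fun ψ => if ψ = a then false else v ψ])

/-- Decidable tautology check. -/
def check (φ : Fml) : Bool := (allAsg φ.leaves.dedup).all (fun v => evalProp v φ)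

lemma evalProp_congr {v w : Fml → Bool} :
    ∀ φ : Fml, (∀ a ∈ φ.leaves, v a = w a) → evalProp v φ = evalProp w φ := by
  intro φ
  induction φ with
  | tt x => intro h; simpa using h _ (by simp [Fml.leaves])
  | ff x => intro h; simpa using h _ (by simp [Fml.leaves])
  | box φ _ => intro h; simpa using h _ (by simp [Fml.leaves])
  | neg φ ih => intro h; simp [ih (by simpa [Fml.leaves] using h)]
  | and φ ψ ih1 ih2 =>
      intro h
      simp [ih1 (fun a ha => h a (by simp [Fml.leaves, ha])),
        ih2 (fun a ha => h a (by simp [Fml.leaves, ha]))]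

lemma exists_mem_allAsg (v : Fml → Bool) : ∀ l : List Fml,
    ∃ w ∈ allAsg l, ∀ a ∈ l, w a = v a := by
  intro l
  induction l with
  | nil => exact ⟨fun _ => false, by simp [allAsg], by simp⟩
  | cons a l ih =>
      obtain ⟨w, hw, hag⟩ := ih
      refine ⟨fun ψ => if ψ = a then v a else w ψ, ?_, ?_⟩
      · simp only [allAsg, List.mem_flatMap]
        refine ⟨w, hw, ?_⟩
        cases hva : v a
        · exact List.mem_cons.2 (Or.inr (by simp [hva]))
        · exact List.mem_cons.2 (Or.inl (by simp [hva]))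
      · intro b hb
        by_cases hba : b = a
        · simp [hba]
        · simp [hba, hag b (by simpa [hba] using hb)]

lemma taut_of_check {φ : Fml} (h : check φ = true) : Tautology φ := by
  intro v
  obtain ⟨w, hw, hag⟩ := exists_mem_allAsg v φ.leaves.dedup
  have h1 : evalProp v φ = evalProp w φ :=
    evalProp_congr φ (fun a ha => (hag a (List.mem_dedup.2 ha)).symm)
  rw [h1]
  exact List.all_eq_true.1 h _ hw

/-- Valuation transport for substitution. -/
def subVal (f : ℕ → Fml) (v : Fml → Bool) : Fml → Bool := fun ψ =>
  match ψ with
  | Fml.tt n => evalProp v (f n)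
  | ψ => v ψ

lemma evalProp_sub (f : ℕ → Fml) (v : Fml → Bool) :
    ∀ φ : Fml, evalProp v (Fml.sub f φ) = evalProp (subVal f v) φ := by
  intro φ
  induction φ with
  | tt n => rfl
  | ff x => rfl
  | box φ _ => rfl
  | neg φ ih => simp [Fml.sub, ih]
  | and φ ψ ih1 ih2 => simp [Fml.sub, ih1, ih2]

lemma Tautology.sub {φ : Fml} (h : Tautology φ) (f : ℕ → Fml) : Tautology (Fml.sub f φ) :=
  fun v => (evalProp_sub f v φ).trans (h (subVal f v))

/-- Scheme parameter list: indices 0 and 1 are reserved as the identity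
(`tt 0`, `tt 1`), parameters start at index 2. -/
def sF (l : List Fml) : ℕ → Fml
  | 0 => Fml.tt 0
  | 1 => Fml.tt 1
  | n + 2 => l.getD n Fml.bot

/-- Prove a `Prv` goal that is a substitution instance of a checkable tautology. -/
lemma prvT {Ax : Set Fml} (sch : Fml) (l : List Fml) {φ : Fml}
    (h : check sch = true := by decide)
    (h2 : Fml.sub (sF l) sch = φ := by rfl) : Prv Ax φ :=
  h2 ▸ Prv.taut ((taut_of_check h).sub (sF l))

/-- Prove a `Prv` goal that is a closed checkable tautology. -/
lemma prvC {Ax : Set Fml} (φ : Fml) (h : check φ = true := by decide) : Prv Ax φ :=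
  Prv.taut (taut_of_check h)

def P2 : Fml := Fml.tt 2
def P3 : Fml := Fml.tt 3
def P4 : Fml := Fml.tt 4
/-! ### Hilbert-style derived rules -/

section Hilbert
variable {Ax : Set Fml} {A B C X : Fml}

-- scheme atoms

lemma wk (h : Prv Ax A) (X : Fml) : Prv Ax (imp X A) :=
  Prv.mp (prvT (imp P2 (imp P3 P2)) [A, X]) h

lemma impTrans (h1 : Prv Ax (imp A B)) (h2 : Prv Ax (imp B C)) : Prv Ax (imp A C) :=
  Prv.mp (Prv.mp (prvT (imp (imp P2 P3) (imp (imp P3 P4) (imp P2 P4))) [A, B, C]) h1) h2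

lemma impMp (h1 : Prv Ax (imp X (imp A B))) (h2 : Prv Ax (imp X A)) : Prv Ax (imp X B) :=
  Prv.mp (Prv.mp (prvT (imp (imp P2 (imp P3 P4)) (imp (imp P2 P3) (imp P2 P4))) [X, A, B]) h1) h2

lemma mono (h : Prv Ax (imp A B)) : Prv Ax (imp (box A) (box B)) :=
  Prv.mp (Prv.axK A B) (Prv.nec h)

lemma boxMp (h1 : Prv Ax (box (imp A B))) (h2 : Prv Ax (box A)) : Prv Ax (box B) :=
  Prv.mp (Prv.mp (Prv.axK A B) h1) h2

lemma uBoxMp (h1 : Prv Ax (imp X (box (imp A B)))) (h2 : Prv Ax (imp X (box A))) :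
    Prv Ax (imp X (box B)) :=
  impMp (impTrans h1 (Prv.axK A B)) h2

lemma tBoxAnd (A B : Fml) : Prv Ax (imp (box A) (imp (box B) (box (Fml.and A B)))) :=
  impTrans (mono (prvT (imp P2 (imp P3 (Fml.and P2 P3))) [A, B])) (Prv.axK B (Fml.and A B))

lemma tContra (h : Prv Ax (imp A B)) : Prv Ax (imp (neg B) (neg A)) :=
  Prv.mp (prvT (imp (imp P2 P3) (imp (neg P3) (neg P2))) [A, B]) h

/-- `□(B→A) → (◇B → ◇A)` -/
lemma diaImp (B A : Fml) : Prv Ax (imp (box (imp B A)) (imp (dia B) (dia A))) := by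
  have s1 : Prv Ax (imp (box (imp B A)) (box (imp (neg A) (neg B)))) :=
    mono (prvT (imp (imp P2 P3) (imp (neg P3) (neg P2))) [B, A])
  have s2 : Prv Ax (imp (box (imp B A)) (imp (box (neg A)) (box (neg B)))) :=
    impTrans s1 (Prv.axK (neg A) (neg B))
  exact Prv.mp (prvT (imp (imp P2 (imp P3 P4)) (imp P2 (imp (neg P4) (neg P3))))
    [box (imp B A), box (neg A), box (neg B)]) s2

/-- `◇¬A → ¬□A` -/
lemma diaNeg (A : Fml) : Prv Ax (imp (dia (neg A)) (neg (box A))) :=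
  tContra (mono (prvT (imp P2 (neg (neg P2))) [A]))

/-- `A → ◇A` -/
lemma tDia (A : Fml) : Prv Ax (imp A (dia A)) :=
  Prv.mp (prvT (imp (imp P2 (neg P3)) (imp P3 (neg P2))) [box (neg A), A]) (Prv.axT (neg A))

/-- `□¬¬A → □A` -/
lemma boxDn (A : Fml) : Prv Ax (imp (box (neg (neg A))) (box A)) :=
  mono (prvT (imp (neg (neg P2)) P2) [A])

/-- `◇□A → □A` -/
lemma diaBox (A : Fml) : Prv Ax (imp (dia (box A)) (box A)) := by
  have h3 : Prv Ax (imp (dia (neg A)) (box (neg (box A)))) :=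
    impTrans (Prv.ax5 (neg A)) (mono (diaNeg A))
  have h4 : Prv Ax (imp (neg (box (neg (box A)))) (neg (dia (neg A)))) := tContra h3
  have h5 : Prv Ax (imp (neg (dia (neg A))) (box (neg (neg A)))) :=
    prvT (imp (neg (neg P2)) P2) [box (neg (neg A))]
  exact impTrans (impTrans h4 h5) (boxDn A)

/-- `□A → □□A` -/
lemma box4 (A : Fml) : Prv Ax (imp (box A) (box (box A))) :=
  impTrans (impTrans (tDia (box A)) (Prv.ax5 (box A))) (mono (diaBox A))

/-- `¬□A → □¬□A` -/
lemma negBoxBox (A : Fml) : Prv Ax (imp (neg (box A)) (box (neg (box A)))) := by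
  have g1 : Prv Ax (imp (neg (box A)) (dia (neg A))) := tContra (boxDn A)
  exact impTrans (impTrans g1 (Prv.ax5 (neg A))) (mono (diaNeg A))

lemma prvWeaken {Ax Ax' : Set Fml} (hsub : Ax ⊆ Ax') {φ : Fml} (h : Prv Ax φ) : Prv Ax' φ := by
  induction h with
  | taut ht => exact Prv.taut ht
  | axK A B => exact Prv.axK A B
  | axT A => exact Prv.axT A
  | ax5 A => exact Prv.ax5 A
  | axm hm => exact Prv.axm (hsub hm)
  | mp _ _ ih1 ih2 => exact Prv.mp ih1 ih2
  | nec _ ih => exact Prv.nec ih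

lemma not_neg_of_consistent {Ax : Set Fml} {φ : Fml}
    (hc : Consistent (Ax ∪ {φ})) (h : Prv Ax (neg φ)) : False := by
  apply hc
  have hφ : Prv (Ax ∪ {φ}) φ := Prv.axm (Or.inr rfl)
  have hn : Prv (Ax ∪ {φ}) (neg φ) := prvWeaken Set.subset_union_left h
  exact Prv.mp (Prv.mp (prvT (imp P2 (imp (neg P2) Fml.bot)) [φ]) hφ) hn

end Hilbert
/-! ### The six types and the main syntactic dichotomy -/

/-- The axiom system `S5[Con, Ground]`. -/
def AxCG : Set Fml := ConAx ∪ GroundAx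

/-- Atom formulas `T, F, N` for variable 1, indexed by a layer. -/
def atF (k : Fin 3) : Fml := if k = 0 then Fml.tt 1 else if k = 1 then Fml.ff 1 else Nf 1

/-- The three state descriptions `T∧¬F`, `¬T∧F`, `N`. -/
def sg (k : Fin 3) : Fml :=
  if k = 0 then Fml.and (Fml.tt 1) (Fml.neg (Fml.ff 1))
  else if k = 1 then Fml.and (Fml.neg (Fml.tt 1)) (Fml.ff 1)
  else Nf 1

/-- The conjunct `◇χ_k` or `¬◇χ_k` according to the type `S`. -/
def cj (S : Fin 3 → Bool) (k : Fin 3) : Fml :=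
  cond (S k) (dia (atF k)) (Fml.neg (dia (atF k)))

/-- The candidate intensional isolator of the type `S`. -/
def base (S : Fin 3 → Bool) : Fml := Fml.and (cj S 0) (Fml.and (cj S 1) (cj S 2))

/-- The cover formula `σ₀ ∨ σ₁ ∨ σ₂`. -/
def cover : Fml := Fml.or (Fml.or (sg 0) (sg 1)) (sg 2)

lemma con1 : Prv AxCG (Fml.neg (Fml.and (Fml.tt 1) (Fml.ff 1))) :=
  Prv.axm (Or.inl ⟨1, rfl⟩)

lemma ground1 :
    Prv AxCG (imp (Fml.and (dia (Fml.tt 1)) (dia (Fml.ff 1))) (dia (Nf 1))) :=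
  Prv.axm (Or.inr ⟨1, rfl⟩)

lemma boxCover : Prv AxCG (box cover) :=
  Prv.nec (Prv.mp (prvC (imp (Fml.neg (Fml.and (Fml.tt 1) (Fml.ff 1))) cover)) con1)

/-- `□(χ_k → σ_k)` (uses Con). -/
lemma boxAtSig (k : Fin 3) : Prv AxCG (box (imp (atF k) (sg k))) := by
  fin_cases k
  · exact boxMp (Prv.nec (prvC (imp (Fml.neg (Fml.and (Fml.tt 1) (Fml.ff 1)))
      (imp (atF 0) (sg 0))))) (Prv.nec con1)
  · exact boxMp (Prv.nec (prvC (imp (Fml.neg (Fml.and (Fml.tt 1) (Fml.ff 1)))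
      (imp (atF 1) (sg 1))))) (Prv.nec con1)
  · exact boxMp (Prv.nec (prvC (imp (Fml.neg (Fml.and (Fml.tt 1) (Fml.ff 1)))
      (imp (atF 2) (sg 2))))) (Prv.nec con1)


/-- Projection to the `k`-th conjunct of `base S`. -/
lemma projCj (S : Fin 3 → Bool) (k : Fin 3) : Prv AxCG (imp (base S) (cj S k)) := by
  fin_cases k
  · exact prvT (imp (Fml.and P2 (Fml.and P3 P4)) P2) [cj S 0, cj S 1, cj S 2]
  · exact prvT (imp (Fml.and P2 (Fml.and P3 P4)) P3) [cj S 0, cj S 1, cj S 2]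
  · exact prvT (imp (Fml.and P2 (Fml.and P3 P4)) P4) [cj S 0, cj S 1, cj S 2]

lemma posProj {S : Fin 3 → Bool} {k : Fin 3} (h : S k = true) :
    Prv AxCG (imp (base S) (dia (atF k))) := by
  have := projCj S k; rwa [cj, h, cond_true] at this

lemma negProj {S : Fin 3 → Bool} {k : Fin 3} (h : S k = false) :
    Prv AxCG (imp (base S) (box (Fml.neg (atF k)))) := by
  have h1 := projCj S k
  rw [cj, h, cond_false] at h1
  exact impTrans h1 (prvT (imp (Fml.neg (Fml.neg P2)) P2) [box (Fml.neg (atF k))])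

/-- From `base → □(σ_k → χ)` for all `k`, conclude `base → □χ`. -/
lemma collect {S : Fin 3 → Bool} {χ : Fml}
    (h : ∀ k : Fin 3, Prv AxCG (imp (base S) (box (imp (sg k) χ)))) :
    Prv AxCG (imp (base S) (box χ)) := by
  have sch : Prv AxCG (box (imp (imp (sg 0) χ) (imp (imp (sg 1) χ)
      (imp (imp (sg 2) χ) (imp cover χ))))) := by
    apply Prv.nec
    exact prvT (imp (imp (sg 0) P2) (imp (imp (sg 1) P2)
      (imp (imp (sg 2) P2) (imp cover P2)))) [χ]
  have c1 := uBoxMp (wk sch (base S)) (h 0)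
  have c2 := uBoxMp c1 (h 1)
  have c3 := uBoxMp c2 (h 2)
  exact uBoxMp c3 (wk boxCover (base S))

/-- `base → □(σ_k → χ)` when `S k = false` (everything holds at absent states). -/
lemma absentSig {S : Fin 3 → Bool} {k : Fin 3} (hk : S k = false) (χ : Fml) :
    Prv AxCG (imp (base S) (box (imp (sg k) χ))) := by
  refine impTrans (negProj hk) (mono ?_)
  fin_cases k
  · exact prvT (imp (Fml.neg (atF 0)) (imp (sg 0) P2)) [χ]
  · exact prvT (imp (Fml.neg (atF 1)) (imp (sg 1) P2)) [χ]
  · exact prvT (imp (Fml.neg (atF 2)) (imp (sg 2) P2)) [χ]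

/-- `base → ◇σ_k` when `S k = true`. -/
lemma posSig {S : Fin 3 → Bool} {k : Fin 3} (hk : S k = true) :
    Prv AxCG (imp (base S) (dia (sg k))) :=
  impTrans (posProj hk) (Prv.mp (diaImp (atF k) (sg k)) (boxAtSig k))
/-! ### The main dichotomy lemmas -/


lemma var_eq_one_tt {x : ℕ} (h : Is1Formula (Fml.tt x)) : x = 1 := by
  have := h (show x ∈ vars (Fml.tt x) from rfl)
  simp only [Set.mem_setOf_eq] at this
  omega

lemma var_eq_one_ff {x : ℕ} (h : Is1Formula (Fml.ff x)) : x = 1 := by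
  have := h (show x ∈ vars (Fml.ff x) from rfl)
  simp only [Set.mem_setOf_eq] at this
  omega

/-- Main Lemma A: for every 1-formula `φ` and state `s`, either
`base S → □(σ_s → φ)` or `base S → □(σ_s → ¬φ)` is provable. -/
lemma lemA (S : Fin 3 → Bool) : ∀ φ : Fml, Is1Formula φ → ∀ s : Fin 3,
    Prv AxCG (imp (base S) (box (imp (sg s) φ))) ∨
    Prv AxCG (imp (base S) (box (imp (sg s) (Fml.neg φ)))) := by
  intro φ
  induction φ with
  | tt x =>
      intro h1 s
      have hx : x = 1 := var_eq_one_tt h1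
      subst hx
      fin_cases s
      · exact Or.inl (wk (Prv.nec (prvC (imp (sg 0) (Fml.tt 1)))) _)
      · exact Or.inr (wk (Prv.nec (prvC (imp (sg 1) (Fml.neg (Fml.tt 1))))) _)
      · exact Or.inr (wk (Prv.nec (prvC (imp (sg 2) (Fml.neg (Fml.tt 1))))) _)
  | ff x =>
      intro h1 s
      have hx : x = 1 := var_eq_one_ff h1
      subst hx
      fin_cases s
      · exact Or.inr (wk (Prv.nec (prvC (imp (sg 0) (Fml.neg (Fml.ff 1))))) _)
      · exact Or.inl (wk (Prv.nec (prvC (imp (sg 1) (Fml.ff 1)))) _)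
      · exact Or.inr (wk (Prv.nec (prvC (imp (sg 2) (Fml.neg (Fml.ff 1))))) _)
  | neg φ ih =>
      intro h1 s
      rcases ih h1 s with h | h
      · exact Or.inr (impTrans h (mono (prvT (imp (imp P2 P3)
          (imp P2 (Fml.neg (Fml.neg P3)))) [sg s, φ])))
      · exact Or.inl h
  | and φ ψ ih1 ih2 =>
      intro h1 s
      have hφ : Is1Formula φ := fun y hy => h1 (Set.mem_union_left _ hy)
      have hψ : Is1Formula ψ := fun y hy => h1 (Set.mem_union_right _ hy)
      rcases ih1 hφ s with h | h
      · rcases ih2 hψ s with h' | h'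
        · refine Or.inl (uBoxMp (uBoxMp (wk (Prv.nec (prvT (imp (imp P2 P3)
            (imp (imp P2 P4) (imp P2 (Fml.and P3 P4)))) [sg s, φ, ψ])) _) h) h')
        · exact Or.inr (impTrans h' (mono (prvT (imp (imp P2 (Fml.neg P4))
            (imp P2 (Fml.neg (Fml.and P3 P4)))) [sg s, φ, ψ])))
      · exact Or.inr (impTrans h (mono (prvT (imp (imp P2 (Fml.neg P3))
          (imp P2 (Fml.neg (Fml.and P3 P4)))) [sg s, φ, ψ])))
  | box φ ih =>
      intro h1 s
      have hφ : Is1Formula φ := h1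
      by_cases hall : ∀ k : Fin 3, S k = true →
          Prv AxCG (imp (base S) (box (imp (sg k) φ)))
      · -- base → □φ
        have hbox : Prv AxCG (imp (base S) (box φ)) := by
          apply collect
          intro k
          cases hk : S k
          · exact absentSig hk φ
          · exact hall k hk
        have hbb : Prv AxCG (imp (base S) (box (box φ))) := impTrans hbox (box4 φ)
        exact Or.inl (impTrans hbb (mono (prvT (imp P2 (imp P3 P2)) [box φ, sg s])))
      · push_neg at hall
        obtain ⟨k, hk, hnp⟩ := hall
        have hneg : Prv AxCG (imp (base S) (box (imp (sg k) (Fml.neg φ)))) := by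
          rcases ih hφ k with h | h
          · exact absurd h hnp
          · exact h
        have hd3 : Prv AxCG (imp (base S) (dia (Fml.neg φ))) :=
          impMp (impTrans hneg (diaImp (sg k) (Fml.neg φ))) (posSig hk)
        have hd4 : Prv AxCG (imp (base S) (Fml.neg (box φ))) := impTrans hd3 (diaNeg φ)
        have hd5 : Prv AxCG (imp (base S) (box (Fml.neg (box φ)))) :=
          impTrans hd4 (negBoxBox φ)
        exact Or.inr (impTrans hd5 (mono (prvT (imp P2 (imp P3 P2))
          [Fml.neg (box φ), sg s])))

/-- Main Lemma B: maximality of `base S` among intensional 1-formulas. -/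
lemma lemB (S : Fin 3 → Bool) : ∀ φ : Fml, Intensional φ → Is1Formula φ →
    Prv AxCG (imp (base S) φ) ∨ Prv AxCG (imp (base S) (Fml.neg φ)) := by
  intro φ
  induction φ with
  | tt x => intro hi _; exact absurd hi (by simp [Intensional])
  | ff x => intro hi _; exact absurd hi (by simp [Intensional])
  | neg φ ih =>
      intro hi h1
      rcases ih hi h1 with h | h
      · exact Or.inr (impTrans h (prvT (imp P2 (Fml.neg (Fml.neg P2))) [φ]))
      · exact Or.inl h
  | and φ ψ ih1 ih2 =>
      intro hi h1
      have hφ : Is1Formula φ := fun y hy => h1 (Set.mem_union_left _ hy)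
      have hψ : Is1Formula ψ := fun y hy => h1 (Set.mem_union_right _ hy)
      rcases ih1 hi.1 hφ with h | h
      · rcases ih2 hi.2 hψ with h' | h'
        · exact Or.inl (Prv.mp (Prv.mp (prvT (imp (imp P2 P3) (imp (imp P2 P4)
            (imp P2 (Fml.and P3 P4)))) [base S, φ, ψ]) h) h')
        · exact Or.inr (impTrans h' (prvT (imp (Fml.neg P4)
            (Fml.neg (Fml.and P3 P4))) [Fml.bot, φ, ψ]))
      · exact Or.inr (impTrans h (prvT (imp (Fml.neg P3)
          (Fml.neg (Fml.and P3 P4))) [Fml.bot, φ, ψ]))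
  | box φ ih =>
      intro _ h1
      have hφ : Is1Formula φ := h1
      by_cases hall : ∀ k : Fin 3, S k = true →
          Prv AxCG (imp (base S) (box (imp (sg k) φ)))
      · refine Or.inl (collect ?_)
        intro k
        cases hk : S k
        · exact absentSig hk φ
        · exact hall k hk
      · push_neg at hall
        obtain ⟨k, hk, hnp⟩ := hall
        have hneg : Prv AxCG (imp (base S) (box (imp (sg k) (Fml.neg φ)))) := by
          rcases lemA S φ hφ k with h | h
          · exact absurd h hnp
          · exact h
        have hd3 : Prv AxCG (imp (base S) (dia (Fml.neg φ))) :=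
          impMp (impTrans hneg (diaImp (sg k) (Fml.neg φ))) (posSig hk)
        exact Or.inr (impTrans hd3 (diaNeg φ))
/-! ### Semantics: soundness and consistency -/

section Semantics
variable {W : Type} (V1 V2 : ℕ → Set W)

@[simp] lemma sat_tt (w : W) (x : ℕ) : Sat V1 V2 w (Fml.tt x) ↔ w ∈ V1 x := Iff.rfl
@[simp] lemma sat_ff (w : W) (x : ℕ) : Sat V1 V2 w (Fml.ff x) ↔ w ∈ V2 x := Iff.rfl
@[simp] lemma sat_neg (w : W) (φ : Fml) : Sat V1 V2 w (Fml.neg φ) ↔ ¬ Sat V1 V2 w φ := Iff.rfl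
@[simp] lemma sat_and (w : W) (φ ψ : Fml) :
    Sat V1 V2 w (Fml.and φ ψ) ↔ Sat V1 V2 w φ ∧ Sat V1 V2 w ψ := Iff.rfl
@[simp] lemma sat_box (w : W) (φ : Fml) :
    Sat V1 V2 w (Fml.box φ) ↔ ∀ v, Sat V1 V2 v φ := Iff.rfl

@[simp] lemma sat_imp (w : W) (φ ψ : Fml) :
    Sat V1 V2 w (imp φ ψ) ↔ (Sat V1 V2 w φ → Sat V1 V2 w ψ) := by
  simp only [Fml.imp, sat_neg, sat_and]; tauto

@[simp] lemma sat_dia (w : W) (φ : Fml) :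
    Sat V1 V2 w (dia φ) ↔ ∃ v, Sat V1 V2 v φ := by
  simp [Fml.dia]

open scoped Classical in
/-- The valuation induced by a world. -/
noncomputable def satv (w : W) : Fml → Bool := fun ψ =>
  if Sat V1 V2 w ψ then true else false

lemma satv_eval (w : W) : ∀ φ : Fml, evalProp (satv V1 V2 w) φ = true ↔ Sat V1 V2 w φ := by
  intro φ
  induction φ with
  | tt x => simp [satv]
  | ff x => simp [satv]
  | box φ _ => simp [satv]
  | neg φ ih =>
      simp only [evalProp_neg, sat_neg, ← ih]
      cases evalProp (satv V1 V2 w) φ <;> simp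
  | and φ ψ ih1 ih2 => simp [Bool.and_eq_true, ih1, ih2]

theorem soundness {Ax : Set Fml} {φ : Fml} (h : Prv Ax φ)
    (hax : ∀ ψ ∈ Ax, ∀ w : W, Sat V1 V2 w ψ) : ∀ w : W, Sat V1 V2 w φ := by
  induction h with
  | taut ht => intro w; exact (satv_eval V1 V2 w _).1 (ht _)
  | axK A B => intro w; simp; intro h1 h2 v; exact h1 v (h2 v)
  | axT A => intro w; simp; intro h1; exact h1 w
  | ax5 A => intro w; simp; intro v hv _; exact ⟨v, hv⟩
  | axm hm => exact hax _ hm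
  | mp _ _ ih1 ih2 => intro w; exact (sat_imp V1 V2 w _ _).1 (ih1 w) (ih2 w)
  | nec _ ih => intro w; simp; exact ih

end Semantics

/-- The model witnessing consistency of `base S`. -/
def MV1 (S : Fin 3 → Bool) : ℕ → Set (Fin 3) := fun x =>
  {w | x = 1 ∧ S 0 = true ∧ (w = 0 ∨ S 2 = false)}

def MV2 (S : Fin 3 → Bool) : ℕ → Set (Fin 3) := fun x =>
  {w | x = 1 ∧ S 1 = true ∧ (w = 1 ∨ S 2 = false)}

lemma consBase (S : Fin 3 → Bool) (h1 : S 0 = true → S 1 = true → S 2 = true)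
    (h2 : S 0 = true ∨ S 1 = true ∨ S 2 = true) :
    Consistent (AxCG ∪ {base S}) := by
  intro hbot
  have hax : ∀ ψ ∈ AxCG ∪ {base S}, ∀ w : Fin 3, Sat (MV1 S) (MV2 S) w ψ := by
    rintro ψ ((⟨x, rfl⟩ | ⟨x, rfl⟩) | rfl)
    · -- Con
      intro w
      simp only [sat_neg, sat_and, sat_tt, sat_ff]
      rintro ⟨ha, hb⟩
      obtain ⟨_, hS0, hw1⟩ := ha
      obtain ⟨_, hS1, hw2⟩ := hb
      have hs2 := h1 hS0 hS1
      rcases hw1 with rfl | h <;> rcases hw2 with h' | h' <;> simp_all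
    · -- Ground
      intro w
      simp only [sat_imp, sat_and, sat_dia, sat_tt, sat_ff]
      rintro ⟨⟨v1, hv1⟩, ⟨v2, hv2⟩⟩
      obtain ⟨rfl, hS0, _⟩ := hv1
      obtain ⟨_, hS1, _⟩ := hv2
      have hs2 := h1 hS0 hS1
      refine ⟨2, ?_, ?_⟩ <;> simp [Nf, MV1, MV2, hs2, Sat]
    · -- base S
      intro w
      refine ⟨?_, ?_, ?_⟩
      · show Sat (MV1 S) (MV2 S) w (cj S 0)
        cases h0 : S 0
        · simp [cj, atF, MV1, h0]
        · simp only [cj, h0, cond_true]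
          rw [show atF 0 = Fml.tt 1 from rfl]
          simp only [sat_dia, sat_tt]
          exact ⟨0, rfl, h0, Or.inl rfl⟩
      · show Sat (MV1 S) (MV2 S) w (cj S 1)
        cases hh : S 1
        · simp [cj, atF, MV2, hh]
        · simp only [cj, hh, cond_true]
          rw [show atF 1 = Fml.ff 1 from rfl]
          simp only [sat_dia, sat_ff]
          exact ⟨1, rfl, hh, Or.inl rfl⟩
      · show Sat (MV1 S) (MV2 S) w (cj S 2)
        cases hh : S 2
        · -- every world is in V1 ∪ V2
          simp only [cj, hh, cond_false]
          rw [show atF 2 = Nf 1 from rfl]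
          simp only [sat_neg, sat_dia, Nf, sat_and, sat_tt, sat_ff]
          rintro ⟨v, hv1, hv2⟩
          rcases h2 with h0 | hS | hS
          · exact hv1 ⟨rfl, h0, Or.inr hh⟩
          · exact hv2 ⟨rfl, hS, Or.inr hh⟩
          · simp_all
        · simp only [cj, hh, cond_true]
          rw [show atF 2 = Nf 1 from rfl]
          simp only [sat_dia, Nf, sat_and, sat_neg, sat_tt, sat_ff]
          refine ⟨2, ?_, ?_⟩
          · rintro ⟨_, _, h | h⟩ <;> simp_all
          · rintro ⟨_, _, h | h⟩ <;> simp_all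
  have := soundness (MV1 S) (MV2 S) hbot hax 0
  exact this.2 this.1
/-! ### Assembly -/

def P5 : Fml := Fml.tt 5

@[simp] lemma vars_tt (x : ℕ) : vars (Fml.tt x) = {x} := rfl
@[simp] lemma vars_ff (x : ℕ) : vars (Fml.ff x) = {x} := rfl
@[simp] lemma vars_neg (φ : Fml) : vars (Fml.neg φ) = vars φ := rfl
@[simp] lemma vars_and (φ ψ : Fml) : vars (Fml.and φ ψ) = vars φ ∪ vars ψ := rfl
@[simp] lemma vars_box (φ : Fml) : vars (Fml.box φ) = vars φ := rfl

lemma intensional_base (S : Fin 3 → Bool) : Intensional (base S) := by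
  have hk : ∀ k, Intensional (cj S k) := by
    intro k; unfold cj; cases S k <;> trivial
  exact ⟨hk 0, hk 1, hk 2⟩

lemma vars_cj1 (S : Fin 3 → Bool) (k : Fin 3) : vars (cj S k) = {1} := by
  unfold cj
  cases S k <;> fin_cases k <;> simp [atF, Nf, Fml.dia]

lemma is1_base (S : Fin 3 → Bool) : IsNFormula 1 (base S) := by
  intro y hy
  have hy' : y ∈ vars (cj S 0) ∪ (vars (cj S 1) ∪ vars (cj S 2)) := hy
  simp only [vars_cj1, Set.union_self, Set.mem_singleton_iff] at hy'
  subst hy'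
  exact ⟨le_refl 1, le_refl 1⟩

lemma isoBase (S : Fin 3 → Bool) (h1 : S 0 = true → S 1 = true → S 2 = true)
    (h2 : S 0 = true ∨ S 1 = true ∨ S 2 = true) : IntIsolator 1 AxCG (base S) :=
  ⟨consBase S h1 h2, ⟨intensional_base S, is1_base S⟩, fun ψ hψ => lemB S ψ hψ.1 hψ.2⟩

/-- Concrete type vectors. -/
def Sv (b0 b1 b2 : Bool) : Fin 3 → Bool := fun k => if k = 0 then b0 else if k = 1 then b1 else b2

def q1 : Fml := base (Sv true true true)
def q2 : Fml := base (Sv true false true)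
def q3 : Fml := base (Sv false true true)
def q4 : Fml := base (Sv true false false)
def q5 : Fml := base (Sv false true false)
def q6 : Fml := base (Sv false false true)

def L6 : List Fml := [q1, q2, q3, q4, q5, q6]

def big6 : Fml := Fml.or q1 (Fml.or q2 (Fml.or q3 (Fml.or q4 (Fml.or q5 q6))))

lemma hTFN : Prv AxCG (imp (box (Fml.neg (Fml.tt 1))) (imp (box (Fml.neg (Fml.ff 1)))
    (dia (Nf 1)))) := by
  have n1 := tBoxAnd (Ax := AxCG) (Fml.neg (Fml.tt 1)) (Fml.neg (Fml.ff 1))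
  have n2 : Prv AxCG (imp (box (Nf 1)) (dia (Nf 1))) :=
    impTrans (Prv.axT (Nf 1)) (tDia (Nf 1))
  exact Prv.mp (Prv.mp (prvT (imp (imp P2 (imp P3 P4)) (imp (imp P4 P5) (imp P2 (imp P3 P5))))
    [box (Fml.neg (Fml.tt 1)), box (Fml.neg (Fml.ff 1)), box (Nf 1), dia (Nf 1)]) n1) n2

lemma hbig : Prv AxCG big6 :=
  Prv.mp (Prv.mp (prvC (imp (imp (box (Fml.neg (Fml.tt 1))) (imp (box (Fml.neg (Fml.ff 1)))
      (dia (Nf 1))))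
    (imp (imp (Fml.and (dia (Fml.tt 1)) (dia (Fml.ff 1))) (dia (Nf 1))) big6))) hTFN) ground1

lemma orStep {Ax : Set Fml} {φ A R : Fml} (hd : Prv Ax (imp φ (Fml.or A R)))
    (hn : Prv Ax (imp φ (Fml.neg A))) : Prv Ax (imp φ R) :=
  Prv.mp (Prv.mp (prvT (imp (imp P2 (Fml.or P3 P4)) (imp (imp P2 (Fml.neg P3)) (imp P2 P4)))
    [φ, A, R]) hd) hn

lemma mkIff {Ax : Set Fml} {A B : Fml} (h1 : Prv Ax (imp A B)) (h2 : Prv Ax (imp B A)) :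
    Prv Ax (Fml.iff A B) :=
  Prv.mp (Prv.mp (prvT (imp (imp P2 P3) (imp (imp P3 P2) (Fml.iff P2 P3))) [A, B]) h1) h2

lemma negSelf {Ax : Set Fml} {A B : Fml} (h1 : Prv Ax (imp A B))
    (h2 : Prv Ax (imp B (Fml.neg A))) : Prv Ax (Fml.neg A) :=
  Prv.mp (Prv.mp (prvT (imp (imp P2 P3) (imp (imp P3 (Fml.neg P2)) (Fml.neg P2))) [A, B]) h1) h2

lemma negSelf2 {Ax : Set Fml} {A B : Fml} (h1 : Prv Ax (imp A B))
    (h2 : Prv Ax (imp A (Fml.neg B))) : Prv Ax (Fml.neg A) :=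
  Prv.mp (Prv.mp (prvT (imp (imp P2 P3) (imp (imp P2 (Fml.neg P3)) (Fml.neg P2))) [A, B]) h1) h2

lemma iffiff {Ax : Set Fml} {A B C : Fml} (h1 : Prv Ax (Fml.iff A B)) (h2 : Prv Ax (Fml.iff A C))
    (h3 : Prv Ax (Fml.neg (Fml.and B C))) : Prv Ax (Fml.neg A) :=
  Prv.mp (Prv.mp (Prv.mp (prvT (imp (Fml.iff P2 P3) (imp (Fml.iff P2 P4)
    (imp (Fml.neg (Fml.and P3 P4)) (Fml.neg P2)))) [A, B, C]) h1) h2) h3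

lemma pairs : ∀ a ∈ L6, ∀ b ∈ L6, a ≠ b → check (Fml.neg (Fml.and a b)) = true := by decide
theorem int_isolators_for_S5ConGround' :
    (∀ φ ∈ L6, IntIsolator 1 (ConAx ∪ GroundAx) φ) ∧
    (∀ φ : Fml, IntIsolator 1 (ConAx ∪ GroundAx) φ →
      ∃! ψ, ψ ∈ L6 ∧ Prv (ConAx ∪ GroundAx) (Fml.iff φ ψ)) := by
  constructor
  · intro φ hφ
    fin_cases hφ
    · exact isoBase (Sv true true true) (by decide) (by decide)
    · exact isoBase (Sv true false true) (by decide) (by decide)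
    · exact isoBase (Sv false true true) (by decide) (by decide)
    · exact isoBase (Sv true false false) (by decide) (by decide)
    · exact isoBase (Sv false true false) (by decide) (by decide)
    · exact isoBase (Sv false false true) (by decide) (by decide)
  · intro φ hφ
    obtain ⟨hcons, ⟨hint, h1f⟩, hmax⟩ := hφ
    have hnn : ¬ Prv AxCG (Fml.neg φ) := fun h => not_neg_of_consistent hcons h
    have key : ∀ ψ0 : Fml, IntIsolator 1 AxCG ψ0 → ψ0 ∈ L6 → Prv AxCG (imp φ ψ0) →
        ∃! ψ, ψ ∈ L6 ∧ Prv AxCG (Fml.iff φ ψ) := by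
      intro ψ0 hiso hmem hp
      have hback : Prv AxCG (imp ψ0 φ) := by
        rcases hiso.2.2 φ ⟨hint, h1f⟩ with h | h
        · exact h
        · exact absurd (negSelf hp h) hnn
      have hiff := mkIff hp hback
      refine ⟨ψ0, ⟨hmem, hiff⟩, ?_⟩
      rintro y ⟨hyL, hyiff⟩
      by_contra hne
      have hpair : Prv AxCG (Fml.neg (Fml.and y ψ0)) :=
        Prv.taut (taut_of_check (pairs y hyL ψ0 hmem hne))
      exact hnn (iffiff hyiff hiff hpair)
    have hd1 : Prv AxCG (imp φ big6) := wk hbig φ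
    rcases hmax q1 ⟨intensional_base _, is1_base _⟩ with h1 | h1
    · exact key q1 (isoBase _ (by decide) (by decide)) (by decide) h1
    · have hd2 := orStep hd1 h1
      rcases hmax q2 ⟨intensional_base _, is1_base _⟩ with h2 | h2
      · exact key q2 (isoBase _ (by decide) (by decide)) (by decide) h2
      · have hd3 := orStep hd2 h2
        rcases hmax q3 ⟨intensional_base _, is1_base _⟩ with h3 | h3
        · exact key q3 (isoBase _ (by decide) (by decide)) (by decide) h3
        · have hd4 := orStep hd3 h3
          rcases hmax q4 ⟨intensional_base _, is1_base _⟩ with h4 | h4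
          · exact key q4 (isoBase _ (by decide) (by decide)) (by decide) h4
          · have hd5 := orStep hd4 h4
            rcases hmax q5 ⟨intensional_base _, is1_base _⟩ with h5 | h5
            · exact key q5 (isoBase _ (by decide) (by decide)) (by decide) h5
            · have hd6 := orStep hd5 h5
              rcases hmax q6 ⟨intensional_base _, is1_base _⟩ with h6 | h6
              · exact key q6 (isoBase _ (by decide) (by decide)) (by decide) h6
              · exact absurd (negSelf2 hd6 h6) hnn
/-- the intensional 1-isolators for S5[Con,Ground] are, up to
S5[Con,Ground]-equivalence, exactly the six formulas ψ1, …, ψ6 (with `x` the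
variable `x_1`). -/
theorem int_isolators_for_S5ConGround :
    (∀ φ ∈ [Fml.and (dia (tt 1)) (Fml.and (dia (ff 1)) (dia (Nf 1))),
            Fml.and (dia (tt 1)) (Fml.and (Fml.neg (dia (ff 1))) (dia (Nf 1))),
            Fml.and (Fml.neg (dia (tt 1))) (Fml.and (dia (ff 1)) (dia (Nf 1))),
            Fml.and (dia (tt 1)) (Fml.and (Fml.neg (dia (ff 1))) (Fml.neg (dia (Nf 1)))),
            Fml.and (Fml.neg (dia (tt 1))) (Fml.and (dia (ff 1)) (Fml.neg (dia (Nf 1)))),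
            Fml.and (Fml.neg (dia (tt 1))) (Fml.and (Fml.neg (dia (ff 1))) (dia (Nf 1)))],
        IntIsolator 1 (ConAx ∪ GroundAx) φ) ∧
    (∀ φ : Fml, IntIsolator 1 (ConAx ∪ GroundAx) φ →
      ∃! ψ, ψ ∈ [Fml.and (dia (tt 1)) (Fml.and (dia (ff 1)) (dia (Nf 1))),
            Fml.and (dia (tt 1)) (Fml.and (Fml.neg (dia (ff 1))) (dia (Nf 1))),
            Fml.and (Fml.neg (dia (tt 1))) (Fml.and (dia (ff 1)) (dia (Nf 1))),
            Fml.and (dia (tt 1)) (Fml.and (Fml.neg (dia (ff 1))) (Fml.neg (dia (Nf 1)))),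
            Fml.and (Fml.neg (dia (tt 1))) (Fml.and (dia (ff 1)) (Fml.neg (dia (Nf 1)))),
            Fml.and (Fml.neg (dia (tt 1))) (Fml.and (Fml.neg (dia (ff 1))) (dia (Nf 1)))] ∧
        Prv (ConAx ∪ GroundAx) (Fml.iff φ ψ)) := by
  exact int_isolators_for_S5ConGround'

end KripkeModal
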